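/- arXiv:2510.25575 — 2 statements merged into one kernel-verified Lean document; each statement's English description precedes it below -/
import Mathlib

section
/- Let A be a finite-dimensional hereditary algebra over F_q of finite representation type, with complete set of indecomposables I₁, …, I_m ordered so that Hom_A(I_s, I_t) = 0 for s > t. For N = ⊕_{t=1}^m I_t^{⊕ r_t} with N_t := I_t^{⊕ r_t}, any filtration 0 = M_m ⊆ ⋯ ⊆ M₀ = N with M_{i−1}/M_i ≅ N_i satisfies M_i = ⊕_{t > i} N_t; in particular F^N_{N₁,…,N_m}(q) = 1. -/
variable {A : Type} [Ring A]

/-- A filtration `0 = M_m ⊆ ⋯ ⊆ M₀ = M` of `M` with `M_{i-1}/M_i ≅ N_i`. -/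
def IsFiltrationBy {M : Type} [AddCommGroup M] [Module A M] {m : ℕ}
    (N : Fin m → Type) [∀ i, AddCommGroup (N i)] [∀ i, Module A (N i)]
    (f : Fin (m + 1) → Submodule A M) : Prop :=
  f 0 = ⊤ ∧ f (Fin.last m) = ⊥ ∧ (∀ i : Fin m, f i.succ ≤ f i.castSucc) ∧
    ∀ i : Fin m, Nonempty
      (((f i.castSucc) ⧸ ((f i.succ).comap (f i.castSucc).subtype)) ≃ₗ[A] N i)

/-- The submodule of `Π t, (Fin (r t) → I t)` of elements supported on indices
`t` with `i ≤ (t : ℕ)`, i.e. `⊕_{t ≥ i} I_t^{⊕ r_t}`. -/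
def suppFrom {m : ℕ} (I : Fin m → Type) [∀ t, AddCommGroup (I t)]
    [∀ t, Module A (I t)] (r : Fin m → ℕ) (i : ℕ) :
    Submodule A (∀ t, Fin (r t) → I t) where
  carrier := {x | ∀ t : Fin m, (t : ℕ) < i → x t = 0}
  add_mem' := by intro x y hx hy t ht; simp [hx t ht, hy t ht]
  zero_mem' := by intro t _; rfl
  smul_mem' := by intro a x hx t ht; simp [hx t ht]

/-!
Every map from a term `f j` of a filtration by the `N_t` to an earlier `N_t` vanishes: descend
from `f m = 0` through the extensions `0 → f (i+1) → f i → N_i → 0`, using that `N_i` has no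
nonzero maps to `N_t` for `t < i`. Consequently two such filtrations `f`, `g` of the same module
coincide: if `f i ≤ g i`, the composite `f (i+1) → g i → g i / g (i+1) ≅ N_i` vanishes, so
`f (i+1) ≤ g (i+1)`. The supports `⊕_{t ≥ i} N_t` form one such filtration.
-/

namespace LinearMap

lemma eq_zero_of_pi {ι κ P Q : Type} [Finite ι] [AddCommGroup P] [Module A P]
    [AddCommGroup Q] [Module A Q] (h : ∀ φ : P →ₗ[A] Q, φ = 0)
    (ψ : (ι → P) →ₗ[A] (κ → Q)) : ψ = 0 := by
  classical
  refine pi_ext' fun i => ?_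
  ext x k
  simpa using LinearMap.congr_fun (h ((proj k ∘ₗ ψ) ∘ₗ single A (fun _ => P) i)) x

end LinearMap

namespace Submodule

variable {M P : Type} [AddCommGroup M] [Module A M] [AddCommGroup P] [Module A P]

lemma le_of_forall_linearMap_eq_zero {p q s : Submodule A M} (hs : s ≤ p)
    (e : (p ⧸ q.comap p.subtype) ≃ₗ[A] P) (h : ∀ φ : s →ₗ[A] P, φ = 0) : s ≤ q := by
  intro x hx
  have hx0 := LinearMap.congr_fun
    (h (e.toLinearMap ∘ₗ (q.comap p.subtype).mkQ ∘ₗ inclusion hs)) ⟨x, hx⟩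
  simpa [Quotient.mk_eq_zero] using hx0

lemma linearMap_eq_zero_of_quotient {Q : Type} [AddCommGroup Q] [Module A Q]
    {p q : Submodule A M} (hq : q ≤ p) (e : (p ⧸ q.comap p.subtype) ≃ₗ[A] Q)
    (hQ : ∀ ψ : Q →ₗ[A] P, ψ = 0) (φ : p →ₗ[A] P) (hφ : φ ∘ₗ inclusion hq = 0) : φ = 0 := by
  have hker : q.comap p.subtype ≤ LinearMap.ker φ := fun x hx =>
    LinearMap.congr_fun hφ ⟨x, hx⟩
  have hlift : (q.comap p.subtype).liftQ φ hker = 0 := by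
    refine LinearMap.ext fun x => ?_
    simpa using LinearMap.congr_fun (hQ ((q.comap p.subtype).liftQ φ hker ∘ₗ e.symm)) (e x)
  rw [← (q.comap p.subtype).liftQ_mkQ φ hker, hlift, LinearMap.zero_comp]

end Submodule

namespace IsFiltrationBy

variable {M : Type} [AddCommGroup M] [Module A M] {m : ℕ} {N : Fin m → Type}
  [∀ i, AddCommGroup (N i)] [∀ i, Module A (N i)] {f g : Fin (m + 1) → Submodule A M}

lemma linearMap_eq_zero (hN : ∀ s t : Fin m, t < s → ∀ φ : N s →ₗ[A] N t, φ = 0)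
    (hf : IsFiltrationBy N f) :
    ∀ j : Fin (m + 1), ∀ t : Fin m, t.castSucc < j → ∀ φ : f j →ₗ[A] N t, φ = 0 := by
  obtain ⟨-, hbot, hle, hquot⟩ := hf
  intro j
  induction j using Fin.reverseInduction with
  | last =>
    intro t _ φ
    have : Subsingleton (f (Fin.last m)) := by rw [hbot]; infer_instance
    exact Subsingleton.elim _ _
  | cast i ih =>
    intro t hti φ
    exact Submodule.linearMap_eq_zero_of_quotient (hle i) (hquot i).some
      (hN i t (Fin.castSucc_lt_castSucc_iff.mp hti)) φ
      (ih t (hti.trans Fin.castSucc_lt_succ) _)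

lemma succ_le_of_le (hN : ∀ s t : Fin m, t < s → ∀ φ : N s →ₗ[A] N t, φ = 0)
    (hf : IsFiltrationBy N f) (hg : IsFiltrationBy N g) {i : Fin m}
    (h : f i.castSucc ≤ g i.castSucc) : f i.succ ≤ g i.succ :=
  Submodule.le_of_forall_linearMap_eq_zero ((hf.2.2.1 i).trans h) (hg.2.2.2 i).some
    (hf.linearMap_eq_zero hN i.succ i Fin.castSucc_lt_succ)

lemma le (hN : ∀ s t : Fin m, t < s → ∀ φ : N s →ₗ[A] N t, φ = 0)
    (hf : IsFiltrationBy N f) (hg : IsFiltrationBy N g) : f ≤ g := by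
  intro i
  induction i using Fin.induction with
  | zero => exact hg.1 ▸ le_top
  | succ i ih => exact hf.succ_le_of_le hN hg ih

lemma unique (hN : ∀ s t : Fin m, t < s → ∀ φ : N s →ₗ[A] N t, φ = 0)
    (hf : IsFiltrationBy N f) (hg : IsFiltrationBy N g) : f = g :=
  (hf.le hN hg).antisymm (hg.le hN hf)

end IsFiltrationBy

section suppFrom

variable {m : ℕ} (I : Fin m → Type) [∀ t, AddCommGroup (I t)] [∀ t, Module A (I t)]
  (r : Fin m → ℕ)

lemma suppFrom_zero : suppFrom (A := A) I r 0 = ⊤ :=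
  eq_top_iff.mpr fun _ _ _ ht => absurd ht (Nat.not_lt_zero _)

lemma suppFrom_self : suppFrom (A := A) I r m = ⊥ :=
  eq_bot_iff.mpr fun _ hx => funext fun t => hx t t.isLt

lemma suppFrom_antitone : Antitone (suppFrom (A := A) I r) :=
  fun _ _ hij _ hx t ht => hx t (ht.trans_le hij)

lemma proj_comp_subtype_suppFrom_surjective (i : Fin m) :
    Function.Surjective (LinearMap.proj i ∘ₗ (suppFrom (A := A) I r i).subtype) := by
  intro y
  refine ⟨⟨Pi.single i y, fun t ht => ?_⟩, by simp⟩
  exact Pi.single_eq_of_ne (M := fun t => Fin (r t) → I t) (Fin.ne_of_val_ne ht.ne) y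

lemma ker_proj_comp_subtype_suppFrom (i : Fin m) :
    LinearMap.ker (LinearMap.proj i ∘ₗ (suppFrom (A := A) I r i).subtype) =
      (suppFrom I r (i + 1)).comap (suppFrom I r i).subtype := by
  ext ⟨x, hx⟩
  simp only [LinearMap.mem_ker, Submodule.mem_comap, LinearMap.comp_apply,
    Submodule.subtype_apply, LinearMap.proj_apply]
  refine ⟨fun hxi t ht => ?_, fun h => h i (Nat.lt_succ_self i)⟩
  rcases (Nat.lt_succ_iff.mp ht).lt_or_eq with ht | ht
  · exact hx t ht
  · exact Fin.ext ht ▸ hxi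

lemma isFiltrationBy_suppFrom :
    IsFiltrationBy (fun t => Fin (r t) → I t) (fun i : Fin (m + 1) => suppFrom (A := A) I r i) := by
  refine ⟨suppFrom_zero I r, suppFrom_self I r,
    fun i => suppFrom_antitone I r Fin.castSucc_lt_succ.le, fun i => ?_⟩
  simp only [Fin.val_castSucc, Fin.val_succ]
  exact ⟨(Submodule.quotEquivOfEq _ _ (ker_proj_comp_subtype_suppFrom I r i).symm).trans
    (LinearMap.quotKerEquivOfSurjective _ (proj_comp_subtype_suppFrom_surjective I r i))⟩

end suppFrom

theorem filtration_of_directed_sum_unique_general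
    {m : ℕ} (I : Fin m → Type) [∀ t, AddCommGroup (I t)] [∀ t, Module A (I t)]
    (hHom : ∀ s t : Fin m, t < s → ∀ φ : I s →ₗ[A] I t, φ = 0)
    (r : Fin m → ℕ) :
    (∀ f : Fin (m + 1) → Submodule A (∀ t, Fin (r t) → I t),
      IsFiltrationBy (fun t => Fin (r t) → I t) f →
        ∀ i : Fin (m + 1), f i = suppFrom I r i) ∧
    Nat.card {f : Fin (m + 1) → Submodule A (∀ t, Fin (r t) → I t) //
      IsFiltrationBy (fun t => Fin (r t) → I t) f} = 1 := by
  have hN : ∀ s t : Fin m, t < s →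
      ∀ φ : (Fin (r s) → I s) →ₗ[A] (Fin (r t) → I t), φ = 0 :=
    fun s t hts => LinearMap.eq_zero_of_pi (hHom s t hts)
  have hsupp := isFiltrationBy_suppFrom (A := A) I r
  have hunique : ∀ f : Fin (m + 1) → Submodule A (∀ t, Fin (r t) → I t),
      IsFiltrationBy (fun t => Fin (r t) → I t) f → ∀ i : Fin (m + 1), f i = suppFrom I r i :=
    fun f hf => congr_fun (hf.unique hN hsupp)
  refine ⟨hunique, Nat.card_eq_one_iff_unique.mpr ⟨⟨fun f g => ?_⟩, ⟨⟨_, hsupp⟩⟩⟩⟩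
  exact Subtype.ext (f.2.unique hN g.2)

/-- Let `I₁, …, I_m` be the indecomposables of a representation-finite
hereditary `F_q`-algebra (here: any family of finite modules), ordered so that
`Hom_A(I_s, I_t) = 0` for `s > t`.  For `N = ⊕_t I_t^{⊕ r_t}` with slices
`N_t = I_t^{⊕ r_t}`, any filtration `0 = M_m ⊆ ⋯ ⊆ M₀ = N` with `M_{i-1}/M_i ≅ N_i`
satisfies `M_i = ⊕_{t > i} N_t`; in particular the number of such filtrations is
`F^N_{N₁,…,N_m}(q) = 1`. -/
theorem filtration_of_directed_sum_unique
    {m : ℕ} (I : Fin m → Type) [∀ t, AddCommGroup (I t)] [∀ t, Module A (I t)]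
    [∀ t, Finite (I t)]
    (hHom : ∀ s t : Fin m, t < s → ∀ φ : I s →ₗ[A] I t, φ = 0)
    (r : Fin m → ℕ) :
    (∀ f : Fin (m + 1) → Submodule A (∀ t, Fin (r t) → I t),
      IsFiltrationBy (fun t => Fin (r t) → I t) f →
        ∀ i : Fin (m + 1), f i = suppFrom I r i) ∧
    Nat.card {f : Fin (m + 1) → Submodule A (∀ t, Fin (r t) → I t) //
      IsFiltrationBy (fun t => Fin (r t) → I t) f} = 1 :=
  filtration_of_directed_sum_unique_general I hHom r
end

section
/- Let A be a finite-dimensional algebra over F_q, let M, N₁, …, N_m be finite A-modules with dim M = Σ dim N_i, and realize these as points in representation varieties with orbits O_M, O_{N_i} under groups G_V, G_{V_{N_i}} of F_q-points. Fix a flag of graded subspaces W_• with subquotients of the dimension vectors of the N_i, with parabolic stabilizer P ≤ G_V and unipotent radical U. Let Y_N ⊆ E be the set of representations preserving the flag whose induced subquotient representations equal the fixed representatives x_i of the N_i. Then F^M_{N₁,…,N_m}(q) = a_M · |Y_N ∩ O_M| / (∏_{i=1}^m a_{N_i} · |U|), where a_M = |Aut_A(M)| and a_{N_i} = |Aut_A(N_i)|.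 -/
/-!
Let `T` be the set of `g ∈ GL(V)` with `g ρM g⁻¹ ∈ Y_N`. Counting `T` along the orbit map
`g ↦ g ρM g⁻¹` gives `|T| = |Y_N ∩ O_M| · a_M`. Counting it along `g ↦ g⁻¹ W` instead, the image
is the set of filtrations of `M` of type `N`. Fix such a filtration `f` with subquotient maps `p`.
For `g` in the fibre over `f`, the maps `πᵢ ∘ g` and `pᵢ` both identify the same subquotient with
`Nᵢ`, so they differ by some `uᵢ ∈ Aut(Nᵢ)`. The `g` with a given `u` are exactly those carrying
the flag `(f, u ∘ p)` to `(W, π)`. Every such flag is isomorphic to the standard flag on `⊕ Vᵢ`,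
so these `g` form a coset of `U`. Hence `|T| = F · ∏ a_{Nᵢ} · |U|`.
-/

theorem card_eq_card_mul_of_card_fiber_eq {α β : Type*} [Finite α] [Finite β] (φ : α → β)
    {n : ℕ} (h : ∀ b, Nat.card {a // φ a = b} = n) : Nat.card α = Nat.card β * n := by
  have := Fintype.ofFinite β
  rw [← Nat.card_congr (Equiv.sigmaFiberEquiv φ), Nat.card_sigma,
    Finset.sum_congr rfl fun b _ => h b, Finset.sum_const, Finset.card_univ, smul_eq_mul,
    Nat.card_eq_fintype_card]

open MulAction in
theorem MulAction.card_smul_mem_eq {G X : Type*} [Group G] [MulAction G X] [Finite G] (x : X)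
    (Y : Set X) :
    Nat.card {g : G // g • x ∈ Y} = Nat.card ↥(Y ∩ orbit G x) * Nat.card (stabilizer G x) := by
  have : Finite (orbit G x) := Set.finite_range _ |>.to_subtype
  refine card_eq_card_mul_of_card_fiber_eq (fun g => ⟨g.1 • x, g.2, mem_orbit x g.1⟩) ?_
  rintro ⟨_, hy, g₁, rfl⟩
  refine Nat.card_congr
    { toFun := fun g => ⟨g₁⁻¹ * g.1.1, ?_⟩
      invFun := fun s => ⟨⟨g₁ * s, ?_⟩, ?_⟩
      left_inv := fun g => by simp
      right_inv := fun s => by simp }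
  · rw [mem_stabilizer_iff, mul_smul, inv_smul_eq_iff]
    exact congrArg Subtype.val g.2
  · rwa [mul_smul, mem_stabilizer_iff.1 s.2]
  · simp [mul_smul, mem_stabilizer_iff.1 s.2]

namespace AlgHom

variable {R A B : Type*} [CommSemiring R] [Semiring A] [Semiring B] [Algebra R A] [Algebra R B]

instance unitsConjMulAction : MulAction Bˣ (A →ₐ[R] B) where
  smul g φ := (MulSemiringAction.toAlgHom R B (ConjAct.toConjAct g)).comp φ
  one_smul φ := AlgHom.ext fun a => by
    change ((1 : Bˣ) : B) * φ a * ↑(1 : Bˣ)⁻¹ = φ a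
    simp
  mul_smul g h φ := AlgHom.ext fun a => by
    change ↑(g * h) * φ a * ↑(g * h)⁻¹ = g * (h * φ a * ↑h⁻¹) * ↑g⁻¹
    simp [mul_assoc]

theorem units_smul_apply (g : Bˣ) (φ : A →ₐ[R] B) (a : A) : (g • φ) a = g * φ a * ↑g⁻¹ := rfl

theorem units_smul_eq_self_iff (g : Bˣ) (φ : A →ₐ[R] B) :
    g • φ = φ ↔ ∀ a, g * φ a = φ a * g := by
  simp only [AlgHom.ext_iff, units_smul_apply, Units.mul_inv_eq_iff_eq_mul]

theorem mem_orbit_units_iff (φ ψ : A →ₐ[R] B) :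
    ψ ∈ MulAction.orbit Bˣ φ ↔ ∃ g : Bˣ, ∀ a, ψ a = g * φ a * ↑g⁻¹ := by
  simp only [MulAction.mem_orbit_iff, AlgHom.ext_iff, units_smul_apply, eq_comm]

theorem card_units_smul_mem_eq [_root_.Finite Bˣ] (φ : A →ₐ[R] B) (Y : Set (A →ₐ[R] B)) :
    Nat.card {g : Bˣ // g • φ ∈ Y} = Nat.card {g : Bˣ // ∀ a, ↑g * φ a = φ a * ↑g} *
      Nat.card {ψ // ψ ∈ Y ∧ ∃ g : Bˣ, ∀ a, ψ a = g * φ a * ↑g⁻¹} := by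
  rw [MulAction.card_smul_mem_eq, mul_comm]
  congr 1
  · exact Nat.card_congr (Equiv.subtypeEquivRight fun g =>
      MulAction.mem_stabilizer_iff.trans (units_smul_eq_self_iff g φ))
  · exact Nat.card_congr (Equiv.subtypeEquivRight fun ψ =>
      and_congr_right' (mem_orbit_units_iff φ ψ))

end AlgHom

instance {R M : Type*} [Semiring R] [AddCommMonoid M] [Module R M] [Finite M] :
    Finite (Module.End R M) :=
  Finite.of_injective _ DFunLike.coe_injective

theorem Module.End.bijective_of_units {R M : Type*} [Semiring R] [AddCommMonoid M] [Module R M]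
    (g : (Module.End R M)ˣ) : Function.Bijective (g : Module.End R M) :=
  (Module.End.isUnit_iff _).1 g.isUnit

theorem Submodule.exists_rightInverse_of_map_eq_top {K M N : Type*} [DivisionRing K]
    [AddCommGroup M] [Module K M] [AddCommGroup N] [Module K N] {S : Submodule K M}
    {p : M →ₗ[K] N} (hp : S.map p = ⊤) :
    ∃ σ : N →ₗ[K] M, ∀ v, σ v ∈ S ∧ p (σ v) = v := by
  obtain ⟨τ, hτ⟩ := (p.domRestrict S).exists_rightInverse_of_surjective
    (by rwa [LinearMap.range_domRestrict])
  exact ⟨S.subtype ∘ₗ τ, fun v => ⟨(τ v).2, DFunLike.congr_fun hτ v⟩⟩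

theorem Submodule.exists_linearEquiv_apply_eq {R M N : Type*} [Ring R]
    [AddCommGroup M] [Module R M] [AddCommGroup N] [Module R N] {S : Submodule R M}
    {p q : M →ₗ[R] N} (hp : S.map p = ⊤) (hq : S.map q = ⊤)
    (hpq : S ⊓ LinearMap.ker p = S ⊓ LinearMap.ker q) :
    ∃ u : N ≃ₗ[R] N, ∀ x ∈ S, q x = u (p x) := by
  have hp' : Function.Surjective (p.domRestrict S) := by
    rw [← LinearMap.range_eq_top, LinearMap.range_domRestrict, hp]
  have hq' : Function.Surjective (q.domRestrict S) := by
    rw [← LinearMap.range_eq_top, LinearMap.range_domRestrict, hq]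
  have hker : LinearMap.ker (p.domRestrict S) = LinearMap.ker (q.domRestrict S) := by
    ext ⟨x, hx⟩
    simpa [hx] using SetLike.ext_iff.1 hpq x
  refine ⟨((p.domRestrict S).quotKerEquivOfSurjective hp').symm ≪≫ₗ
    Submodule.quotEquivOfEq _ _ hker ≪≫ₗ (q.domRestrict S).quotKerEquivOfSurjective hq',
    fun x hx => ?_⟩
  rw [show p x = p.domRestrict S ⟨x, hx⟩ from rfl]
  simp only [LinearEquiv.trans_apply, LinearMap.quotKerEquivOfSurjective_symm_apply,
    Submodule.quotEquivOfEq_mk, LinearMap.quotKerEquivOfSurjective_apply_mk]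
  rfl

section FramedFlag

variable {K V : Type*} [Field K] [AddCommGroup V] [Module K V] {m : ℕ} {Vn : Fin m → Type*}
  [∀ i, AddCommGroup (Vn i)] [∀ i, Module K (Vn i)]

/-- A flag `f` whose `i`-th subquotient `f i.castSucc / f i.succ` is identified with
`Vn i` through `p i`. -/
structure IsFramedFlag (f : Fin (m + 1) → Submodule K V) (p : ∀ i, V →ₗ[K] Vn i) : Prop where
  zero_eq_top : f 0 = ⊤
  last_eq_bot : f (Fin.last m) = ⊥
  succ_le_castSucc : ∀ i : Fin m, f i.succ ≤ f i.castSucc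
  map_eq_top : ∀ i : Fin m, (f i.castSucc).map (p i) = ⊤
  inf_ker_eq : ∀ i : Fin m, f i.castSucc ⊓ LinearMap.ker (p i) = f i.succ

variable (K Vn) in
def stdFlag (j : Fin (m + 1)) : Submodule K (∀ i, Vn i) :=
  Submodule.pi {i | i.castSucc < j} fun _ => ⊥

theorem mem_stdFlag {j : Fin (m + 1)} {v : ∀ i, Vn i} :
    v ∈ stdFlag K Vn j ↔ ∀ i : Fin m, i.castSucc < j → v i = 0 := by
  simp [stdFlag, Submodule.mem_pi]

theorem stdFlag_antitone : Antitone (stdFlag K Vn) := fun _ _ hjk _ hv =>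
  mem_stdFlag.2 fun i hi => mem_stdFlag.1 hv i (hi.trans_le hjk)

namespace IsFramedFlag

variable {f : Fin (m + 1) → Submodule K V} {p : ∀ i, V →ₗ[K] Vn i}

theorem antitone (hf : IsFramedFlag f p) : Antitone f :=
  Fin.antitone_iff_succ_le.2 hf.succ_le_castSucc

theorem succ_le_ker (hf : IsFramedFlag f p) (i : Fin m) : f i.succ ≤ LinearMap.ker (p i) :=
  hf.inf_ker_eq i ▸ inf_le_right

variable {σ : ∀ i, Vn i →ₗ[K] V}

theorem lsum_mem (hf : IsFramedFlag f p) (hσ : ∀ i v, σ i v ∈ f i.castSucc) {j : Fin (m + 1)}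
    {v : ∀ i, Vn i} (hv : v ∈ stdFlag K Vn j) : LinearMap.lsum K Vn K σ v ∈ f j := by
  rw [LinearMap.lsum_apply, LinearMap.sum_apply]
  refine Submodule.sum_mem _ fun i _ => ?_
  by_cases h : i.castSucc < j
  · simp [mem_stdFlag.1 hv i h]
  · exact hf.antitone (not_lt.1 h) (hσ i (v i))

theorem apply_lsum (hf : IsFramedFlag f p)
    (hσ : ∀ i v, σ i v ∈ f i.castSucc ∧ p i (σ i v) = v) {i : Fin m} {v : ∀ i, Vn i}
    (hv : v ∈ stdFlag K Vn i.castSucc) : p i (LinearMap.lsum K Vn K σ v) = v i := by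
  rw [LinearMap.lsum_apply, LinearMap.sum_apply, map_sum, Finset.sum_eq_single i]
  · exact (hσ i (v i)).2
  · intro k _ hk
    rcases lt_or_gt_of_ne hk with hlt | hgt
    · simp [mem_stdFlag.1 hv k (Fin.castSucc_lt_castSucc_iff.2 hlt)]
    · exact hf.succ_le_ker i (hf.antitone (Fin.succ_le_castSucc_iff.2 hgt) (hσ k (v k)).1)
  · simp

theorem lsum_injective (hf : IsFramedFlag f p)
    (hσ : ∀ i v, σ i v ∈ f i.castSucc ∧ p i (σ i v) = v) :
    Function.Injective (LinearMap.lsum K Vn K σ) := by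
  refine (injective_iff_map_eq_zero _).2 fun v hv => ?_
  have hmem : ∀ j, v ∈ stdFlag K Vn j := by
    refine Fin.induction (mem_stdFlag.2 fun i hi => absurd hi (Fin.not_lt_zero _)) fun i ih => ?_
    have hvi : v i = 0 := by rw [← hf.apply_lsum hσ ih, hv, map_zero]
    refine mem_stdFlag.2 fun k hk => ?_
    rcases (Fin.castSucc_lt_succ_iff.1 hk).eq_or_lt with rfl | hlt
    · exact hvi
    · exact mem_stdFlag.1 ih k hlt
  exact funext fun i => mem_stdFlag.1 (hmem (Fin.last m)) i (Fin.castSucc_lt_last i)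

theorem le_map_lsum (hf : IsFramedFlag f p)
    (hσ : ∀ i v, σ i v ∈ f i.castSucc ∧ p i (σ i v) = v) (j : Fin (m + 1)) :
    f j ≤ (stdFlag K Vn j).map (LinearMap.lsum K Vn K σ) := by
  induction j using Fin.reverseInduction with
  | last => simp [hf.last_eq_bot]
  | cast i ih =>
    intro w hw
    have hv₁ : (Pi.single i (p i w) : ∀ k, Vn k) ∈ stdFlag K Vn i.castSucc :=
      mem_stdFlag.2 fun k hk => Pi.single_eq_of_ne (Fin.castSucc_lt_castSucc_iff.1 hk).ne _
    have hw₁ : w - LinearMap.lsum K Vn K σ (Pi.single i (p i w)) ∈ f i.succ := by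
      rw [← hf.inf_ker_eq i]
      refine ⟨sub_mem hw (hf.lsum_mem (fun k v => (hσ k v).1) hv₁), ?_⟩
      change _ ∈ LinearMap.ker (p i)
      rw [LinearMap.mem_ker, map_sub, hf.apply_lsum hσ hv₁, Pi.single_eq_same, sub_self]
    obtain ⟨v₂, hv₂, hv₂w⟩ := ih hw₁
    exact ⟨_ + v₂, add_mem hv₁ (stdFlag_antitone Fin.castSucc_lt_succ.le hv₂),
      by rw [map_add, hv₂w, add_sub_cancel]⟩

/-- The isomorphism glues sections of the `p i` taking values in `f i.castSucc`. -/
theorem exists_linearEquiv_map_stdFlag (hf : IsFramedFlag f p) :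
    ∃ s : (∀ i, Vn i) ≃ₗ[K] V, (∀ j, (stdFlag K Vn j).map (s : (∀ i, Vn i) →ₗ[K] V) = f j) ∧
      ∀ i, ∀ v ∈ stdFlag K Vn i.castSucc, p i (s v) = v i := by
  choose σ hσ using fun i => Submodule.exists_rightInverse_of_map_eq_top (hf.map_eq_top i)
  have hsurj : Function.Surjective (LinearMap.lsum K Vn K σ) := by
    rw [← LinearMap.range_eq_top, eq_top_iff, ← hf.zero_eq_top]
    exact (hf.le_map_lsum hσ 0).trans LinearMap.map_le_range
  refine ⟨LinearEquiv.ofBijective _ ⟨hf.lsum_injective hσ, hsurj⟩, fun j => ?_,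
    fun i v hv => hf.apply_lsum hσ hv⟩
  refine le_antisymm ?_ (hf.le_map_lsum hσ j)
  rintro _ ⟨v, hv, rfl⟩
  exact hf.lsum_mem (fun k v => (hσ k v).1) hv

end IsFramedFlag

/-- `MapsFramedFlag g W π W π` is the defining condition of the unipotent radical `U`. -/
def MapsFramedFlag (g : Module.End K V) (f : Fin (m + 1) → Submodule K V)
    (p : ∀ i, V →ₗ[K] Vn i) (f' : Fin (m + 1) → Submodule K V) (p' : ∀ i, V →ₗ[K] Vn i) :
    Prop :=
  (∀ j, (f j).map g = f' j) ∧ ∀ (i : Fin m) (x : V), x ∈ f i.castSucc → p' i (g x) = p i x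

namespace MapsFramedFlag

variable {f f' f'' : Fin (m + 1) → Submodule K V} {p p' p'' : ∀ i, V →ₗ[K] Vn i}

theorem mul {g₁ g₂ : Module.End K V} (h₁ : MapsFramedFlag g₁ f' p' f'' p'')
    (h₂ : MapsFramedFlag g₂ f p f' p') : MapsFramedFlag (g₁ * g₂) f p f'' p'' := by
  refine ⟨fun _ => ?_, fun i x hx => ?_⟩
  · rw [Module.End.mul_eq_comp, Submodule.map_comp, h₂.1, h₁.1]
  · rw [Module.End.mul_apply, h₁.2 i _ (h₂.1 i.castSucc ▸ Submodule.mem_map_of_mem hx),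
      h₂.2 i x hx]

theorem inv {g : (Module.End K V)ˣ} (h : MapsFramedFlag g f p f' p') :
    MapsFramedFlag ↑g⁻¹ f' p' f p := by
  have hf : ∀ j, (f' j).map ((g⁻¹ : (Module.End K V)ˣ) : Module.End K V) = f j := fun j => by
    rw [← h.1, ← Submodule.map_comp, ← Module.End.mul_eq_comp, Units.inv_mul,
      Module.End.one_eq_id, Submodule.map_id]
  refine ⟨hf, fun i x hx => ?_⟩
  rw [← h.2 i _ (hf i.castSucc ▸ Submodule.mem_map_of_mem hx), ← Module.End.mul_apply,
    Units.mul_inv, Module.End.one_apply]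

end MapsFramedFlag

theorem mapsFramedFlag_comap (g : (Module.End K V)ˣ) (f : Fin (m + 1) → Submodule K V)
    (p : ∀ i, V →ₗ[K] Vn i) :
    MapsFramedFlag g (fun j => (f j).comap (g : Module.End K V)) (fun i => p i ∘ₗ g) f p :=
  ⟨fun _ => Submodule.map_comap_eq_of_surjective (Module.End.bijective_of_units g).surjective _,
    fun _ _ _ => rfl⟩

namespace IsFramedFlag

variable {f f' : Fin (m + 1) → Submodule K V} {p p' : ∀ i, V →ₗ[K] Vn i}

theorem exists_mapsFramedFlag (hf : IsFramedFlag f p) (hf' : IsFramedFlag f' p') :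
    ∃ g : (Module.End K V)ˣ, MapsFramedFlag g f p f' p' := by
  obtain ⟨s, hs, hsp⟩ := hf.exists_linearEquiv_map_stdFlag
  obtain ⟨s', hs', hsp'⟩ := hf'.exists_linearEquiv_map_stdFlag
  refine ⟨LinearMap.GeneralLinearGroup.ofLinearEquiv (s.symm ≪≫ₗ s'), fun j => ?_,
    fun i x hx => ?_⟩
  · rw [← hs j, ← hs' j, ← Submodule.map_comp]
    congr 1
    ext v
    simp
  · rw [← hs] at hx
    obtain ⟨v, hv, rfl⟩ := hx
    simp [hsp' i v hv, hsp i v hv]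

theorem card_mapsFramedFlag (hf : IsFramedFlag f p) (hf' : IsFramedFlag f' p') :
    Nat.card {g : (Module.End K V)ˣ // MapsFramedFlag g f p f' p'} =
      Nat.card {g : (Module.End K V)ˣ // MapsFramedFlag g f' p' f' p'} := by
  obtain ⟨g₀, hg₀⟩ := hf'.exists_mapsFramedFlag hf
  refine Nat.card_congr (Equiv.subtypeEquiv (Equiv.mulRight g₀) fun g =>
    ⟨fun hg => ?_, fun hg => ?_⟩)
  · simpa using hg.mul hg₀
  · simpa using hg.mul hg₀.inv

theorem comap (hf : IsFramedFlag f p) (g : (Module.End K V)ˣ) :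
    IsFramedFlag (fun j => (f j).comap (g : Module.End K V)) (fun i => p i ∘ₗ g) where
  zero_eq_top := by simp [hf.zero_eq_top]
  last_eq_bot := by
    simpa [hf.last_eq_bot] using
      LinearMap.ker_eq_bot.2 (Module.End.bijective_of_units g).injective
  succ_le_castSucc i := Submodule.comap_mono (hf.succ_le_castSucc i)
  map_eq_top i := by
    rw [Submodule.map_comp, Submodule.map_comap_eq_of_surjective
      (Module.End.bijective_of_units g).surjective, hf.map_eq_top]
  inf_ker_eq i := by rw [LinearMap.ker_comp, ← Submodule.comap_inf, hf.inf_ker_eq]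

theorem comp_units (hf : IsFramedFlag f p) (u : ∀ i, (Module.End K (Vn i))ˣ) :
    IsFramedFlag f (fun i => (u i : Module.End K (Vn i)) ∘ₗ p i) where
  __ := hf
  map_eq_top i := by
    rw [Submodule.map_comp, hf.map_eq_top, Submodule.map_top, LinearMap.range_eq_top]
    exact (Module.End.bijective_of_units (u i)).surjective
  inf_ker_eq i := by
    rw [LinearMap.ker_comp, LinearMap.ker_eq_bot.2 (Module.End.bijective_of_units (u i)).injective,
      Submodule.comap_bot, hf.inf_ker_eq]

theorem exists_units {q : ∀ i, V →ₗ[K] Vn i} (hp : IsFramedFlag f p) (hq : IsFramedFlag f q)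
    (i : Fin m) :
    ∃ u : (Module.End K (Vn i))ˣ,
      ∀ x ∈ f i.castSucc, q i x = (u : Module.End K (Vn i)) (p i x) := by
  obtain ⟨e, he⟩ := Submodule.exists_linearEquiv_apply_eq (hp.map_eq_top i) (hq.map_eq_top i)
    (by rw [hp.inf_ker_eq, hq.inf_ker_eq])
  exact ⟨LinearMap.GeneralLinearGroup.ofLinearEquiv e, he⟩

end IsFramedFlag

end FramedFlag

section Representation

variable {K V A : Type*} [Field K] [AddCommGroup V] [Module K V] [Ring A] [Algebra K A] {m : ℕ}
  {Vn : Fin m → Type*} [∀ i, AddCommGroup (Vn i)] [∀ i, Module K (Vn i)]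

/-- `InducesOnFlag ρ ρn W π` says `ρ ∈ Y_N`. -/
def InducesOnFlag (ρ : A →ₐ[K] Module.End K V) (ρn : ∀ i, A →ₐ[K] Module.End K (Vn i))
    (f : Fin (m + 1) → Submodule K V) (p : ∀ i, V →ₗ[K] Vn i) : Prop :=
  (∀ (j : Fin (m + 1)) (a : A), (f j).map (ρ a) ≤ f j) ∧
  (∀ (i : Fin m) (a : A) (x : V), x ∈ f i.castSucc → p i (ρ a x) = ρn i a (p i x))

variable {ρ : A →ₐ[K] Module.End K V} {ρn : ∀ i, A →ₐ[K] Module.End K (Vn i)}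
  {f f' : Fin (m + 1) → Submodule K V} {p p' : ∀ i, V →ₗ[K] Vn i}

theorem MapsFramedFlag.inducesOnFlag_smul {g : (Module.End K V)ˣ}
    (hg : MapsFramedFlag g f p f' p') (hρ : InducesOnFlag ρ ρn f p) :
    InducesOnFlag (g • ρ) ρn f' p' := by
  have hinv := hg.inv
  refine ⟨fun j a => ?_, fun i a x hx => ?_⟩
  · rw [AlgHom.units_smul_apply, Module.End.mul_eq_comp, Module.End.mul_eq_comp,
      Submodule.map_comp, Submodule.map_comp, hinv.1, ← hg.1]
    exact Submodule.map_mono (hρ.1 j a)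
  · have hx' : ((g⁻¹ : (Module.End K V)ˣ) : Module.End K V) x ∈ f i.castSucc :=
      hinv.1 i.castSucc ▸ Submodule.mem_map_of_mem hx
    rw [AlgHom.units_smul_apply, Module.End.mul_apply, Module.End.mul_apply,
      hg.2 i _ (hρ.1 _ a (Submodule.mem_map_of_mem hx')), hρ.2 i a _ hx', hinv.2 i x hx]

theorem MapsFramedFlag.inducesOnFlag_smul_iff {g : (Module.End K V)ˣ}
    (hg : MapsFramedFlag g f p f' p') :
    InducesOnFlag (g • ρ) ρn f' p' ↔ InducesOnFlag ρ ρn f p :=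
  ⟨fun h => by simpa using hg.inv.inducesOnFlag_smul (g := g⁻¹) h, hg.inducesOnFlag_smul⟩

theorem InducesOnFlag.comp_units (hρ : InducesOnFlag ρ ρn f p)
    {u : ∀ i, (Module.End K (Vn i))ˣ}
    (hu : ∀ i a, (u i : Module.End K (Vn i)) * ρn i a = ρn i a * u i) :
    InducesOnFlag ρ ρn f (fun i => (u i : Module.End K (Vn i)) ∘ₗ p i) :=
  ⟨hρ.1, fun i a x hx => by
    rw [LinearMap.comp_apply, LinearMap.comp_apply, hρ.2 i a x hx, ← Module.End.mul_apply, hu,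
      Module.End.mul_apply]⟩

theorem InducesOnFlag.commute {q : ∀ i, V →ₗ[K] Vn i} (hp : InducesOnFlag ρ ρn f p)
    (hq : InducesOnFlag ρ ρn f q) {i : Fin m} (hsurj : (f i.castSucc).map (p i) = ⊤)
    {u : Module.End K (Vn i)} (hu : ∀ x ∈ f i.castSucc, q i x = u (p i x)) (a : A) :
    u * ρn i a = ρn i a * u := by
  refine LinearMap.ext fun v => ?_
  obtain ⟨x, hx, rfl⟩ : v ∈ (f i.castSucc).map (p i) := hsurj ▸ Submodule.mem_top
  have hρx : ρ a x ∈ f i.castSucc := hp.1 _ a (Submodule.mem_map_of_mem hx)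
  simp only [Module.End.mul_apply]
  rw [← hp.2 i a x hx, ← hu _ hρx, hq.2 i a x hx, hu x hx]

theorem exists_isFramedFlag_inducesOnFlag_iff :
    (∃ p, IsFramedFlag f p ∧ InducesOnFlag ρ ρn f p) ↔
      f 0 = ⊤ ∧ f (Fin.last m) = ⊥ ∧ (∀ i : Fin m, f i.succ ≤ f i.castSucc) ∧
        (∀ (i : Fin (m + 1)) (a : A), (f i).map (ρ a) ≤ f i) ∧
        (∀ i : Fin m, ∃ p : V →ₗ[K] Vn i, (f i.castSucc).map p = ⊤ ∧
          f i.castSucc ⊓ LinearMap.ker p = f i.succ ∧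
          ∀ (a : A) (x : V), x ∈ f i.castSucc → p (ρ a x) = ρn i a (p x)) := by
  constructor
  · rintro ⟨p, hf, hρ⟩
    exact ⟨hf.zero_eq_top, hf.last_eq_bot, hf.succ_le_castSucc, hρ.1,
      fun i => ⟨p i, hf.map_eq_top i, hf.inf_ker_eq i, hρ.2 i⟩⟩
  · rintro ⟨h0, hlast, hmono, hstab, hp⟩
    choose p hmap hker hρ using hp
    exact ⟨p, ⟨h0, hlast, hmono, hmap, hker⟩, hstab, hρ⟩

end Representation

section Counting

variable {K V A : Type*} [Field K] [AddCommGroup V] [Module K V] [Finite V] [Ring A]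
  [Algebra K A] {m : ℕ} {Vn : Fin m → Type*} [∀ i, AddCommGroup (Vn i)] [∀ i, Module K (Vn i)]
  [∀ i, Finite (Vn i)] {ρ : A →ₐ[K] Module.End K V} {ρn : ∀ i, A →ₐ[K] Module.End K (Vn i)}
  {W : Fin (m + 1) → Submodule K V} {π : ∀ i, V →ₗ[K] Vn i}

theorem card_units_smul_inducesOnFlag_comap_eq (hW : IsFramedFlag W π)
    {f : Fin (m + 1) → Submodule K V} {p : ∀ i, V →ₗ[K] Vn i} (hf : IsFramedFlag f p)
    (hρ : InducesOnFlag ρ ρn f p) :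
    Nat.card {g : (Module.End K V)ˣ //
        InducesOnFlag (g • ρ) ρn W π ∧ (fun j => (W j).comap (g : Module.End K V)) = f} =
      Nat.card (∀ i, {u : (Module.End K (Vn i))ˣ //
          ∀ a, (u : Module.End K (Vn i)) * ρn i a = ρn i a * u}) *
        Nat.card {g : (Module.End K V)ˣ // MapsFramedFlag g W π W π} := by
  set S := {g : (Module.End K V)ˣ //
    InducesOnFlag (g • ρ) ρn W π ∧ (fun j => (W j).comap (g : Module.End K V)) = f}
  have hS : ∀ g : S, IsFramedFlag f (fun i => π i ∘ₗ g.1) ∧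
      InducesOnFlag ρ ρn f (fun i => π i ∘ₗ g.1) := by
    rintro ⟨g, hgρ, rfl⟩
    exact ⟨hW.comap g, (mapsFramedFlag_comap g W π).inducesOnFlag_smul_iff.1 hgρ⟩
  -- `u g` is the family of automorphisms of the `Nᵢ` by which the frame `π ∘ g` differs from `p`.
  choose u hu using fun (g : S) i => hf.exists_units (hS g).1 i
  refine card_eq_card_mul_of_card_fiber_eq
    (fun g i => ⟨u g i, hρ.commute (hS g).2 (hf.map_eq_top i) (hu g i)⟩) fun v => ?_
  rw [← (hf.comp_units fun i => (v i).1).card_mapsFramedFlag hW]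
  refine Nat.card_congr ((Equiv.subtypeEquivRight fun g => ⟨fun hg => ?_, fun hg => ?_⟩).trans
    (Equiv.subtypeSubtypeEquivSubtype fun {g} hg => ⟨hg.inducesOnFlag_smul
      (hρ.comp_units fun i => (v i).2), funext fun j => ?_⟩))
  · refine ⟨fun j => ?_, fun i x hx => ?_⟩
    · rw [← congrFun g.2.2 j, Submodule.map_comap_eq_of_surjective
        (Module.End.bijective_of_units g.1).surjective]
    · rw [← hg]
      exact hu g i x hx
  · refine funext fun i => Subtype.ext (Units.ext (LinearMap.ext fun w => ?_))
    obtain ⟨x, hx, rfl⟩ : w ∈ (f i.castSucc).map (p i) := hf.map_eq_top i ▸ Submodule.mem_top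
    exact (hu g i x hx).symm.trans (hg.2 i x hx)
  · rw [← hg.1 j, Submodule.comap_map_eq_of_injective (Module.End.bijective_of_units g).injective]

theorem card_units_smul_inducesOnFlag (hW : IsFramedFlag W π) :
    Nat.card {g : (Module.End K V)ˣ // InducesOnFlag (g • ρ) ρn W π} =
      Nat.card {f // ∃ p, IsFramedFlag f p ∧ InducesOnFlag ρ ρn f p} *
        ((∏ i, Nat.card {u : (Module.End K (Vn i))ˣ //
          ∀ a, (u : Module.End K (Vn i)) * ρn i a = ρn i a * u}) *
          Nat.card {g : (Module.End K V)ˣ // MapsFramedFlag g W π W π}) := by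
  let Φ : {g : (Module.End K V)ˣ // InducesOnFlag (g • ρ) ρn W π} →
      {f // ∃ p, IsFramedFlag f p ∧ InducesOnFlag ρ ρn f p} := fun g =>
    ⟨fun j => (W j).comap (g.1 : Module.End K V), fun i => π i ∘ₗ g.1, hW.comap g.1,
      (mapsFramedFlag_comap g.1 W π).inducesOnFlag_smul_iff.1 g.2⟩
  refine card_eq_card_mul_of_card_fiber_eq Φ ?_
  rintro ⟨f, p, hf, hρ⟩
  rw [← Nat.card_pi, ← card_units_smul_inducesOnFlag_comap_eq hW hf hρ]
  exact Nat.card_congr ((Equiv.subtypeEquivRight fun g => Subtype.ext_iff).trans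
    (Equiv.subtypeSubtypeEquivSubtypeInter
      (fun g : (Module.End K V)ˣ => InducesOnFlag (g • ρ) ρn W π)
      fun g => (fun j => (W j).comap (g : Module.End K V)) = f))

end Counting

theorem filtration_count_formula_general
    (Fq : Type) [Field Fq] [Fintype Fq]
    (A : Type) [Ring A] [Algebra Fq A]
    (V : Type) [AddCommGroup V] [Module Fq V] [FiniteDimensional Fq V]
    (m : ℕ) (Vn : Fin m → Type) [∀ i, AddCommGroup (Vn i)] [∀ i, Module Fq (Vn i)]
    [∀ i, FiniteDimensional Fq (Vn i)]
    -- representatives of the modules `M` and `N₁, …, N_m`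
    (ρM : A →ₐ[Fq] Module.End Fq V)
    (ρn : ∀ i, A →ₐ[Fq] Module.End Fq (Vn i))
    -- the fixed flag of graded subspaces with its subquotient identifications
    (W : Fin (m + 1) → Submodule Fq V)
    (hW0 : W 0 = ⊤) (hWlast : W (Fin.last m) = ⊥)
    (hWmono : ∀ i : Fin m, W i.succ ≤ W i.castSucc)
    (π : ∀ i : Fin m, V →ₗ[Fq] Vn i)
    (hπsurj : ∀ i : Fin m, (W i.castSucc).map (π i) = ⊤)
    (hπker : ∀ i : Fin m, W i.castSucc ⊓ LinearMap.ker (π i) = W i.succ) :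
    -- `F^M_{N₁,…,N_m}(q)`, the number of `A`-stable filtrations of `(V, ρM)` with
    -- `i`-th subquotient isomorphic to `(Vᵢ, ρᵢ)`
    Nat.card {f : Fin (m + 1) → Submodule Fq V //
        f 0 = ⊤ ∧ f (Fin.last m) = ⊥ ∧ (∀ i : Fin m, f i.succ ≤ f i.castSucc) ∧
        (∀ (i : Fin (m + 1)) (a : A), (f i).map (ρM a) ≤ f i) ∧
        (∀ i : Fin m, ∃ p : V →ₗ[Fq] Vn i,
          (f i.castSucc).map p = ⊤ ∧ f i.castSucc ⊓ LinearMap.ker p = f i.succ ∧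
          ∀ (a : A) (x : V), x ∈ f i.castSucc → p (ρM a x) = ρn i a (p x))} *
      -- `∏ᵢ a_{Nᵢ}`, the orders of the automorphism groups of the `Nᵢ`
      (∏ i, Nat.card {g : (Module.End Fq (Vn i))ˣ //
        ∀ a : A, (g : Module.End Fq (Vn i)) * ρn i a = ρn i a * g}) *
      -- `|U|`, the order of the unipotent radical of the parabolic
      Nat.card {g : (Module.End Fq V)ˣ //
        (∀ i : Fin (m + 1), (W i).map (g : Module.End Fq V) = W i) ∧
        (∀ (i : Fin m) (x : V), x ∈ W i.castSucc →
          π i ((g : Module.End Fq V) x) = π i x)} =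
    -- `a_M`, the order of the automorphism group of `M`
    Nat.card {g : (Module.End Fq V)ˣ //
        ∀ a : A, (g : Module.End Fq V) * ρM a = ρM a * g} *
      -- `|Y_N ∩ O_M|`
      Nat.card {ρ : A →ₐ[Fq] Module.End Fq V //
        ((∀ (i : Fin (m + 1)) (a : A), (W i).map (ρ a) ≤ W i) ∧
         (∀ (i : Fin m) (a : A) (x : V), x ∈ W i.castSucc →
            π i (ρ a x) = ρn i a (π i x))) ∧
        (∃ g : (Module.End Fq V)ˣ, ∀ a : A,
          ρ a = (g : Module.End Fq V) * ρM a * ((g⁻¹ : (Module.End Fq V)ˣ) :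
            Module.End Fq V))} := by
  have : Finite V := Module.finite_of_finite Fq
  have : ∀ i, Finite (Vn i) := fun i => Module.finite_of_finite Fq
  have hW : IsFramedFlag W π := ⟨hW0, hWlast, hWmono, hπsurj, hπker⟩
  rw [Nat.card_congr (Equiv.subtypeEquivRight fun f => exists_isFramedFlag_inducesOnFlag_iff.symm),
    mul_assoc]
  exact (card_units_smul_inducesOnFlag hW).symm.trans
    (AlgHom.card_units_smul_mem_eq ρM {ρ | InducesOnFlag ρ ρn W π})

/-- key counting formula for filtration numbers.  Modules over a
finite-dimensional `F_q`-algebra `A` are realized as points of representation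
varieties: algebra maps `ρ : A →ₐ[F_q] End(V)`, acted on by conjugation by
`G_V = GL(V) = (End V)ˣ`.  Fix representatives `ρM` of `M` on `V` and `ρᵢ` of `Nᵢ`
on `Vᵢ` with `dim V = Σ dim Vᵢ`, a flag `W_•` of subspaces of `V` with subquotients
identified with the `Vᵢ` via projections `πᵢ`, the parabolic stabilizer `P` with
unipotent radical `U` (elements preserving the flag and inducing the identity on the
subquotients), and `Y_N` the set of representations preserving the flag and inducing
exactly `ρᵢ` on the `i`-th subquotient.  Then
`F^M_{N₁,…,N_m}(q) · ∏ᵢ a_{Nᵢ} · |U| = a_M · |Y_N ∩ O_M|`,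
i.e. `F^M_{N₁,…,N_m}(q) = a_M |Y_N ∩ O_M| / (∏ᵢ a_{Nᵢ} |U|)`. -/
theorem filtration_count_formula
    (Fq : Type) [Field Fq] [Fintype Fq]
    (A : Type) [Ring A] [Algebra Fq A] [FiniteDimensional Fq A]
    (V : Type) [AddCommGroup V] [Module Fq V] [FiniteDimensional Fq V]
    (m : ℕ) (Vn : Fin m → Type) [∀ i, AddCommGroup (Vn i)] [∀ i, Module Fq (Vn i)]
    [∀ i, FiniteDimensional Fq (Vn i)]
    (hdim : Module.finrank Fq V = ∑ i, Module.finrank Fq (Vn i))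
    -- representatives of the modules `M` and `N₁, …, N_m`
    (ρM : A →ₐ[Fq] Module.End Fq V)
    (ρn : ∀ i, A →ₐ[Fq] Module.End Fq (Vn i))
    -- the fixed flag of graded subspaces with its subquotient identifications
    (W : Fin (m + 1) → Submodule Fq V)
    (hW0 : W 0 = ⊤) (hWlast : W (Fin.last m) = ⊥)
    (hWmono : ∀ i : Fin m, W i.succ ≤ W i.castSucc)
    (π : ∀ i : Fin m, V →ₗ[Fq] Vn i)
    (hπsurj : ∀ i : Fin m, (W i.castSucc).map (π i) = ⊤)
    (hπker : ∀ i : Fin m, W i.castSucc ⊓ LinearMap.ker (π i) = W i.succ) :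
    -- `F^M_{N₁,…,N_m}(q)`, the number of `A`-stable filtrations of `(V, ρM)` with
    -- `i`-th subquotient isomorphic to `(Vᵢ, ρᵢ)`
    Nat.card {f : Fin (m + 1) → Submodule Fq V //
        f 0 = ⊤ ∧ f (Fin.last m) = ⊥ ∧ (∀ i : Fin m, f i.succ ≤ f i.castSucc) ∧
        (∀ (i : Fin (m + 1)) (a : A), (f i).map (ρM a) ≤ f i) ∧
        (∀ i : Fin m, ∃ p : V →ₗ[Fq] Vn i,
          (f i.castSucc).map p = ⊤ ∧ f i.castSucc ⊓ LinearMap.ker p = f i.succ ∧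
          ∀ (a : A) (x : V), x ∈ f i.castSucc → p (ρM a x) = ρn i a (p x))} *
      -- `∏ᵢ a_{Nᵢ}`, the orders of the automorphism groups of the `Nᵢ`
      (∏ i, Nat.card {g : (Module.End Fq (Vn i))ˣ //
        ∀ a : A, (g : Module.End Fq (Vn i)) * ρn i a = ρn i a * g}) *
      -- `|U|`, the order of the unipotent radical of the parabolic
      Nat.card {g : (Module.End Fq V)ˣ //
        (∀ i : Fin (m + 1), (W i).map (g : Module.End Fq V) = W i) ∧
        (∀ (i : Fin m) (x : V), x ∈ W i.castSucc →
          π i ((g : Module.End Fq V) x) = π i x)} =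
    -- `a_M`, the order of the automorphism group of `M`
    Nat.card {g : (Module.End Fq V)ˣ //
        ∀ a : A, (g : Module.End Fq V) * ρM a = ρM a * g} *
      -- `|Y_N ∩ O_M|`
      Nat.card {ρ : A →ₐ[Fq] Module.End Fq V //
        ((∀ (i : Fin (m + 1)) (a : A), (W i).map (ρ a) ≤ W i) ∧
         (∀ (i : Fin m) (a : A) (x : V), x ∈ W i.castSucc →
            π i (ρ a x) = ρn i a (π i x))) ∧
        (∃ g : (Module.End Fq V)ˣ, ∀ a : A,
          ρ a = (g : Module.End Fq V) * ρM a * ((g⁻¹ : (Module.End Fq V)ˣ) :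
            Module.End Fq V))} :=
  filtration_count_formula_general Fq A V m Vn ρM ρn W hW0 hWlast hWmono π hπsurj hπker
end
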